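/- Let G_1 and G_2 be finite simple graphs whose vertex sets intersect in exactly one vertex v, and let G = G_1 ∪ G_2 (union of vertex sets and edge sets). Then minrk_q(G) = minrk_q(G_1 − v) + minrk_q(G_2 − v) + (minrk_q(G_1) − minrk_q(G_1 − v)) · (minrk_q(G_2) − minrk_q(G_2 − v)). -/

import Mathlib

/-!
Put `A = S1 \ {v}` and `B = S2 \ {v}`. There are no edges between `A` and `B`, so a fitting matrix
of `G` is block diagonal on `A ∪ B`, which gives `minrk A + minrk B ≤ minrk G`; gluing optimal
matrices gives `minrk G ≤ minrk S1 + minrk B` and `minrk G ≤ minrk A + minrk S2`. Since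
`minrk Sᵢ - minrk (Sᵢ \ {v})` is `0` or `1`, it remains to show `minrk A + minrk B < minrk G`
when both differences are `1`. If a fitting `M` had rank `minrk A + minrk B`, its rank would be
carried by the block on `A ∪ B`, so `M = C * diag(M_A, M_B) * C'` with `C`, `C'` the identity on
`A ∪ B`. This splits `M = K + L` with `K` supported on `S1 × S1`, `L` on `S2 × S2`,
`rank K ≤ minrk A` and `rank L ≤ minrk B`. As `M v v = K v v + L v v ≠ 0`, either `K` fits
`G[S1]` or `L` fits `G[S2]`, with rank too small.
-/

open scoped Classical

/-- A matrix `M` fits the graph `G` if its diagonal entries are nonzero and its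
entries at distinct non-adjacent pairs of vertices are zero. -/
def Fits {V F : Type} [Fintype V] [Field F]
    (G : SimpleGraph V) (M : Matrix V V F) : Prop :=
  (∀ u, M u u ≠ 0) ∧ ∀ u v, u ≠ v → ¬ G.Adj u v → M u v = 0

/-- The min-rank of `G` over the field `F`: the minimum rank of a matrix fitting `G`. -/
noncomputable def minrk (F : Type) [Field F] {V : Type} [Fintype V]
    (G : SimpleGraph V) : ℕ :=
  sInf {r : ℕ | ∃ M : Matrix V V F, Fits G M ∧ M.rank = r}

open Function Matrix

theorem LinearMap.finrank_range_prodMap {F M₁ M₂ N₁ N₂ : Type*} [DivisionRing F]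
    [AddCommGroup M₁] [Module F M₁] [AddCommGroup M₂] [Module F M₂]
    [AddCommGroup N₁] [Module F N₁] [FiniteDimensional F N₁]
    [AddCommGroup N₂] [Module F N₂] [FiniteDimensional F N₂]
    (f : M₁ →ₗ[F] N₁) (g : M₂ →ₗ[F] N₂) :
    Module.finrank F (LinearMap.range (f.prodMap g)) =
      Module.finrank F (LinearMap.range f) + Module.finrank F (LinearMap.range g) := by
  set ι := (LinearMap.range f).subtype.prodMap (LinearMap.range g).subtype
  have hι : Injective ι := Subtype.val_injective.prodMap Subtype.val_injective
  have hfac : f.prodMap g = ι ∘ₗ f.rangeRestrict.prodMap g.rangeRestrict := rfl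
  rw [hfac, LinearMap.range_comp_of_range_eq_top, ← Module.finrank_prod,
    ← (LinearEquiv.ofInjective ι hι).finrank_eq]
  rw [LinearMap.range_prodMap, LinearMap.range_rangeRestrict, LinearMap.range_rangeRestrict,
    Submodule.prod_top]

namespace Matrix

theorem submatrix_sumElim_eq_fromBlocks {R m α β : Type*} [Zero R] {M : Matrix m m R}
    {g₁ : α → m} {g₂ : β → m}
    (h₁₂ : M.submatrix g₁ g₂ = 0) (h₂₁ : M.submatrix g₂ g₁ = 0) :
    M.submatrix (Sum.elim g₁ g₂) (Sum.elim g₁ g₂) =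
      fromBlocks (M.submatrix g₁ g₁) 0 0 (M.submatrix g₂ g₂) := by
  rw [← h₁₂, ← h₂₁]
  ext (i | i) (j | j) <;> rfl

variable {F : Type*} [Field F]

theorem rank_fromBlocks_zero_zero {m₁ m₂ n₁ n₂ : Type*} [Fintype m₁] [Fintype m₂]
    [Fintype n₁] [Fintype n₂] (X : Matrix m₁ n₁ F) (Y : Matrix m₂ n₂ F) :
    (fromBlocks X 0 0 Y).rank = X.rank + Y.rank := by
  have h : (fromBlocks X 0 0 Y).mulVecLin =
      (LinearEquiv.sumArrowLequivProdArrow m₁ m₂ F F).symm.toLinearMap ∘ₗ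
        X.mulVecLin.prodMap Y.mulVecLin ∘ₗ
          (LinearEquiv.sumArrowLequivProdArrow n₁ n₂ F F).toLinearMap := by
    refine LinearMap.ext fun x => funext fun i => ?_
    rcases i with i | i <;> simp [fromBlocks_mulVec] <;> rfl
  rw [rank, h, LinearMap.range_comp, LinearMap.range_comp_of_range_eq_top _ (LinearEquiv.range _),
    LinearEquiv.finrank_map_eq, LinearMap.finrank_range_prodMap]
  rfl

variable {m n ι κ α β : Type*} [Fintype m] [Fintype n] [Fintype ι] [Fintype κ]
  [Fintype α] [Fintype β]

theorem rank_add_rank_le_of_submatrix_eq_zero {M : Matrix m m F} {g₁ : α → m} {g₂ : β → m}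
    (h₁₂ : M.submatrix g₁ g₂ = 0) (h₂₁ : M.submatrix g₂ g₁ = 0) :
    (M.submatrix g₁ g₁).rank + (M.submatrix g₂ g₂).rank ≤ M.rank := by
  rw [← rank_fromBlocks_zero_zero, ← submatrix_sumElim_eq_fromBlocks h₁₂ h₂₁]
  exact rank_submatrix_le _ _ _

theorem exists_eq_mul_submatrix_of_rank_le (M : Matrix m n F) {g : ι → m} (hg : Injective g)
    (h : M.rank ≤ (M.submatrix g id).rank) :
    ∃ C : Matrix m ι F, C.submatrix g id = 1 ∧ M = C * M.submatrix g id := by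
  have hspan : Submodule.span F (Set.range (M.submatrix g id).row) =
      Submodule.span F (Set.range M.row) := by
    refine Submodule.eq_of_le_of_finrank_le (Submodule.span_mono ?_) ?_
    · rintro _ ⟨t, rfl⟩
      exact ⟨g t, rfl⟩
    · rw [← rank_eq_finrank_span_row, ← rank_eq_finrank_span_row]
      exact h
  have hrow : ∀ i, ∃ c : ι → F, (∀ t, g t = i → c = (1 : Matrix ι ι F) t) ∧
      ∀ j, M i j = ∑ t, c t * M (g t) j := fun i => by
    by_cases hi : ∃ t, g t = i
    · obtain ⟨t, rfl⟩ := hi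
      exact ⟨(1 : Matrix ι ι F) t, fun s hs => by rw [hg hs], fun j => by simp [one_apply]⟩
    · obtain ⟨c, hc⟩ := (Submodule.mem_span_range_iff_exists_fun F).1
        (hspan ▸ Submodule.subset_span (Set.mem_range_self i))
      exact ⟨c, fun t ht => (hi ⟨t, ht⟩).elim,
        fun j => by simpa [Finset.sum_apply] using (congrFun hc j).symm⟩
  choose C hC₁ hC₂ using hrow
  exact ⟨of C, funext fun t => hC₁ (g t) t rfl, by ext i j; simp [mul_apply, hC₂ i j]⟩

theorem exists_eq_mul_submatrix_mul_of_rank_le (M : Matrix m n F) {g : ι → m} {g' : κ → n}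
    (hg : Injective g) (hg' : Injective g') (h : M.rank ≤ (M.submatrix g g').rank) :
    ∃ (C : Matrix m ι F) (C' : Matrix κ n F), C.submatrix g id = 1 ∧ C'.submatrix id g' = 1 ∧
      M = C * M.submatrix g g' * C' := by
  obtain ⟨C, hC, hMC⟩ := M.exists_eq_mul_submatrix_of_rank_le hg
    (h.trans (rank_submatrix_le (M.submatrix g id) id g'))
  obtain ⟨D, hD, hMD⟩ := Mᵀ.exists_eq_mul_submatrix_of_rank_le hg' (by
    simpa [rank_transpose, ← transpose_submatrix] using
      h.trans (rank_submatrix_le (M.submatrix id g') g id))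
  refine ⟨C, Dᵀ, hC, by simpa [← transpose_submatrix] using congrArg transpose hD, ?_⟩
  have hMD' : M = M.submatrix id g' * Dᵀ := by
    simpa [transpose_mul, ← transpose_submatrix] using congrArg transpose hMD
  have hrows : M.submatrix g id = M.submatrix g g' * Dᵀ := by
    conv_lhs => rw [hMD']
    rfl
  rw [Matrix.mul_assoc, ← hrows]
  exact hMC

theorem exists_eq_add_of_rank_le_add (M : Matrix m m F) {g₁ : α → m} {g₂ : β → m}
    (hg : Injective (Sum.elim g₁ g₂)) (h₁₂ : M.submatrix g₁ g₂ = 0)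
    (h₂₁ : M.submatrix g₂ g₁ = 0)
    (h : M.rank ≤ (M.submatrix g₁ g₁).rank + (M.submatrix g₂ g₂).rank) :
    ∃ K L : Matrix m m F, M = K + L ∧
      K.rank ≤ (M.submatrix g₁ g₁).rank ∧ L.rank ≤ (M.submatrix g₂ g₂).rank ∧
      K.submatrix g₂ id = 0 ∧ K.submatrix id g₂ = 0 ∧
      L.submatrix g₁ id = 0 ∧ L.submatrix id g₁ = 0 := by
  have hblk := submatrix_sumElim_eq_fromBlocks h₁₂ h₂₁
  obtain ⟨C, C', hC, hC', hM⟩ := M.exists_eq_mul_submatrix_mul_of_rank_le hg hg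
    (by rwa [hblk, rank_fromBlocks_zero_zero])
  have hC₁ : C.toCols₁.submatrix g₂ id = 0 := by
    ext b a; simpa using congrFun (congrFun hC (Sum.inr b)) (Sum.inl a)
  have hC₂ : C.toCols₂.submatrix g₁ id = 0 := by
    ext a b; simpa using congrFun (congrFun hC (Sum.inl a)) (Sum.inr b)
  have hC'₁ : C'.toRows₁.submatrix id g₂ = 0 := by
    ext a b; simpa using congrFun (congrFun hC' (Sum.inl a)) (Sum.inr b)
  have hC'₂ : C'.toRows₂.submatrix id g₁ = 0 := by
    ext b a; simpa using congrFun (congrFun hC' (Sum.inr b)) (Sum.inl a)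
  refine ⟨C.toCols₁ * M.submatrix g₁ g₁ * C'.toRows₁, C.toCols₂ * M.submatrix g₂ g₂ * C'.toRows₂,
    ?_, (rank_mul_le_left _ _).trans (rank_mul_le_right _ _),
    (rank_mul_le_left _ _).trans (rank_mul_le_right _ _), ?_, ?_, ?_, ?_⟩
  · rw [hblk] at hM
    conv_lhs => rw [hM, ← fromCols_toCols C, ← fromRows_toRows C']
    rw [fromCols_mul_fromBlocks, fromCols_mul_fromRows]
    simp
  all_goals simp [submatrix_mul _ _ _ id _ bijective_id, hC₁, hC₂, hC'₁, hC'₂]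

end Matrix

section Minrk

variable {F : Type} [Field F] {V : Type} [Fintype V] {G : SimpleGraph V}

theorem fits_one (G : SimpleGraph V) : Fits G (1 : Matrix V V F) :=
  ⟨fun _ => by simp, fun _ _ huw _ => one_apply_ne huw⟩

theorem Fits.comap {M : Matrix V V F} (hM : Fits G M) {W : Type} [Fintype W] {f : W → V}
    (hf : Injective f) : Fits (G.comap f) (M.submatrix f f) :=
  ⟨fun u => hM.1 (f u), fun _ _ huw hadj => hM.2 _ _ (hf.ne huw) hadj⟩

theorem Fits.induce {M : Matrix V V F} (hM : Fits G M) (s : Set V) [Fintype s] :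
    Fits (G.induce s) (M.submatrix ((↑) : s → V) (↑)) :=
  ⟨fun u => hM.1 u, fun _ _ huw hadj => hM.2 _ _ (Subtype.val_injective.ne huw) hadj⟩

theorem Fits.submatrix_eq_zero {M : Matrix V V F} (hM : Fits G M) {A B : Set V}
    (hAB : Disjoint A B) (hsep : ∀ a ∈ A, ∀ b ∈ B, ¬ G.Adj a b) :
    M.submatrix ((↑) : A → V) ((↑) : B → V) = 0 := by
  ext a b
  exact hM.2 a b (hAB.ne_of_mem a.2 b.2) (hsep a a.2 b b.2)

theorem minrk_le_rank {M : Matrix V V F} (hM : Fits G M) : minrk F G ≤ M.rank :=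
  Nat.sInf_le ⟨M, hM, rfl⟩

theorem exists_fits_rank_eq_minrk (G : SimpleGraph V) :
    ∃ M : Matrix V V F, Fits G M ∧ M.rank = minrk F G :=
  Nat.sInf_mem (⟨_, 1, fits_one G, rfl⟩ : {r | ∃ M : Matrix V V F, Fits G M ∧ M.rank = r}.Nonempty)

theorem minrk_le_card (G : SimpleGraph V) : minrk F G ≤ Fintype.card V := by
  simpa using minrk_le_rank (fits_one (F := F) G)

theorem minrk_comap_le {W : Type} [Fintype W] {f : W → V} (hf : Injective f) :
    minrk F (G.comap f) ≤ minrk F G := by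
  obtain ⟨M, hM, hrk⟩ := exists_fits_rank_eq_minrk (F := F) G
  exact (minrk_le_rank (hM.comap hf)).trans (hrk ▸ rank_submatrix_le M f f)

theorem minrk_le_minrk_comap_add_minrk_comap {W₁ W₂ : Type} [Fintype W₁] [Fintype W₂]
    {f₁ : W₁ → V} {f₂ : W₂ → V} (hf : Surjective (Sum.elim f₁ f₂)) :
    minrk F G ≤ minrk F (G.comap f₁) + minrk F (G.comap f₂) := by
  obtain ⟨M₁, hM₁, hr₁⟩ := exists_fits_rank_eq_minrk (F := F) (G.comap f₁)
  obtain ⟨M₂, hM₂, hr₂⟩ := exists_fits_rank_eq_minrk (F := F) (G.comap f₂)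
  set σ := surjInv hf
  have hσ : ∀ u, Sum.elim f₁ f₂ (σ u) = u := surjInv_eq hf
  have hfit : Fits G ((fromBlocks M₁ 0 0 M₂).submatrix σ σ) := by
    constructor
    · intro u
      rcases hu : σ u with x | x
      · simpa [hu] using hM₁.1 x
      · simpa [hu] using hM₂.1 x
    · intro u w huw hadj
      have hu := hσ u
      have hw := hσ w
      rcases hu' : σ u with x | x <;> rcases hw' : σ w with y | y <;>
        simp only [hu', hw', Sum.elim_inl, Sum.elim_inr] at hu hw <;> subst hu hw <;>
        simp only [submatrix_apply, hu', hw', fromBlocks_apply₁₁, fromBlocks_apply₁₂,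
          fromBlocks_apply₂₁, fromBlocks_apply₂₂, Matrix.zero_apply]
      · exact hM₁.2 x y (fun h => huw (h ▸ rfl)) hadj
      · exact hM₂.2 x y (fun h => huw (h ▸ rfl)) hadj
  calc minrk F G ≤ ((fromBlocks M₁ 0 0 M₂).submatrix σ σ).rank := minrk_le_rank hfit
    _ ≤ (fromBlocks M₁ 0 0 M₂).rank := rank_submatrix_le _ _ _
    _ = _ := by rw [rank_fromBlocks_zero_zero, hr₁, hr₂]

theorem minrk_le_minrk_induce_add_minrk_induce {s t : Set V} [Fintype s] [Fintype t]
    (hst : s ∪ t = Set.univ) :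
    minrk F G ≤ minrk F (G.induce s) + minrk F (G.induce t) := by
  refine minrk_le_minrk_comap_add_minrk_comap fun u => ?_
  rcases (hst.symm ▸ Set.mem_univ u : u ∈ s ∪ t) with hu | hu
  · exact ⟨Sum.inl ⟨u, hu⟩, rfl⟩
  · exact ⟨Sum.inr ⟨u, hu⟩, rfl⟩

theorem minrk_induce_add_minrk_induce_le {A B : Set V} [Fintype A] [Fintype B]
    (hAB : Disjoint A B) (hsep : ∀ a ∈ A, ∀ b ∈ B, ¬ G.Adj a b) :
    minrk F (G.induce A) + minrk F (G.induce B) ≤ minrk F G := by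
  obtain ⟨M, hM, hrk⟩ := exists_fits_rank_eq_minrk (F := F) G
  have hA := minrk_le_rank (hM.induce A)
  have hB := minrk_le_rank (hM.induce B)
  have hsum := rank_add_rank_le_of_submatrix_eq_zero (hM.submatrix_eq_zero hAB hsep)
    (hM.submatrix_eq_zero hAB.symm fun b hb a ha h => hsep a ha b hb h.symm)
  omega

theorem minrk_induce_le_rank_of_agree {M K : Matrix V V F} (hM : Fits G M) {S : Set V}
    [Fintype S] {v : V} (hv : K v v ≠ 0)
    (hK : ∀ x y, x ∈ S \ {v} ∨ y ∈ S \ {v} → K x y = M x y) :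
    minrk F (G.induce S) ≤ K.rank := by
  refine (minrk_le_rank (M := K.submatrix ((↑) : S → V) (↑))
    ⟨fun u => ?_, fun x y hxy hadj => ?_⟩).trans (rank_submatrix_le _ _ _)
  · by_cases hu : (u : V) = v
    · simpa [hu] using hv
    · simpa [hK u u (Or.inl ⟨u.2, hu⟩)] using hM.1 u
  · have hxy' : (x : V) ∈ S \ {v} ∨ (y : V) ∈ S \ {v} := by
      by_cases hx : (x : V) = v
      · exact Or.inr ⟨y.2, fun hy => hxy (Subtype.ext (hx.trans hy.symm))⟩
      · exact Or.inl ⟨x.2, hx⟩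
    simpa [hK x y hxy'] using hM.2 x y (Subtype.val_injective.ne hxy) hadj

theorem minrk_induce_diff_add_minrk_induce_diff_lt {S T : Set V} {v : V} [Fintype S] [Fintype T]
    [Fintype ↥(S \ {v})] [Fintype ↥(T \ {v})]
    (hST : Disjoint (S \ {v}) (T \ {v})) (hsep : ∀ a ∈ S \ {v}, ∀ b ∈ T \ {v}, ¬ G.Adj a b)
    (hS : minrk F (G.induce (S \ {v})) < minrk F (G.induce S))
    (hT : minrk F (G.induce (T \ {v})) < minrk F (G.induce T)) :
    minrk F (G.induce (S \ {v})) + minrk F (G.induce (T \ {v})) < minrk F G := by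
  by_contra! hle
  obtain ⟨M, hM, hrk⟩ := exists_fits_rank_eq_minrk (F := F) G
  have h₁₂ := hM.submatrix_eq_zero hST hsep
  have h₂₁ := hM.submatrix_eq_zero hST.symm fun b hb a ha h => hsep a ha b hb h.symm
  have hA := minrk_le_rank (hM.induce (S \ {v}))
  have hB := minrk_le_rank (hM.induce (T \ {v}))
  have hsum := rank_add_rank_le_of_submatrix_eq_zero h₁₂ h₂₁
  obtain ⟨K, L, hKL, hK, hL, hK₁, hK₂, hL₁, hL₂⟩ := M.exists_eq_add_of_rank_le_add
    (Subtype.val_injective.sumElim Subtype.val_injective fun a b h => hST.ne_of_mem a.2 b.2 h)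
    h₁₂ h₂₁ (by omega)
  have hK0 : ∀ x y, x ∈ T \ {v} ∨ y ∈ T \ {v} → K x y = 0 := by
    rintro x y (hx | hy)
    · exact congrFun (congrFun hK₁ ⟨x, hx⟩) y
    · exact congrFun (congrFun hK₂ x) ⟨y, hy⟩
  have hL0 : ∀ x y, x ∈ S \ {v} ∨ y ∈ S \ {v} → L x y = 0 := by
    rintro x y (hx | hy)
    · exact congrFun (congrFun hL₁ ⟨x, hx⟩) y
    · exact congrFun (congrFun hL₂ x) ⟨y, hy⟩
  have hv : K v v + L v v ≠ 0 := by simpa [hKL] using hM.1 v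
  by_cases hKv : K v v = 0
  · have := minrk_induce_le_rank_of_agree (S := T) hM (by simpa [hKv] using hv) fun x y hxy => by
      rw [hKL, Matrix.add_apply, hK0 x y hxy, zero_add]
    omega
  · have := minrk_induce_le_rank_of_agree (S := S) hM hKv fun x y hxy => by
      rw [hKL, Matrix.add_apply, hL0 x y hxy, add_zero]
    omega

end Minrk

section MinrkInduce

variable {F : Type} [Field F] {V : Type} {G : SimpleGraph V}

theorem minrk_induce_mono {s t : Set V} [Fintype s] [Fintype t] (hst : s ⊆ t) :
    minrk F (G.induce s) ≤ minrk F (G.induce t) :=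
  minrk_comap_le (G := G.induce t) (f := Set.inclusion hst) (Set.inclusion_injective hst)

theorem minrk_induce_le_minrk_induce_diff_add_one {s : Set V} {w : V} [Fintype s]
    [Fintype ↥(s \ {w})] (hw : w ∈ s) :
    minrk F (G.induce s) ≤ minrk F (G.induce (s \ {w})) + 1 := by
  have hf : Surjective (Sum.elim (Set.inclusion Set.sdiff_subset : ↥(s \ {w}) → s)
      fun _ : Unit => ⟨w, hw⟩) := by
    intro x
    by_cases hx : (x : V) = w
    · exact ⟨Sum.inr (), Subtype.ext hx.symm⟩
    · exact ⟨Sum.inl ⟨x, x.2, hx⟩, rfl⟩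
  exact (minrk_le_minrk_comap_add_minrk_comap hf).trans
    (Nat.add_le_add le_rfl (minrk_le_card _))

end MinrkInduce

theorem minrk_union_one_common_vertex_general {V F : Type} [Fintype V] [Field F]
    (G : SimpleGraph V) (S1 S2 : Set V) (v : V)
    (hcap : S1 ∩ S2 = {v}) (hcup : S1 ∪ S2 = Set.univ)
    (hedges : ∀ a b, G.Adj a b → (a ∈ S1 ∧ b ∈ S1) ∨ (a ∈ S2 ∧ b ∈ S2)) :
    minrk F G =
      minrk F (G.induce (S1 \ {v})) + minrk F (G.induce (S2 \ {v})) +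
        (minrk F (G.induce S1) - minrk F (G.induce (S1 \ {v}))) *
          (minrk F (G.induce S2) - minrk F (G.induce (S2 \ {v}))) := by
  have hmem : ∀ x ∈ S1, x ∈ S2 → x = v := fun x h₁ h₂ => (hcap ▸ ⟨h₁, h₂⟩ : x ∈ ({v} : Set V))
  have hall : ∀ x, x ∈ S1 ∨ x ∈ S2 := fun x => (hcup.symm ▸ Set.mem_univ x : x ∈ S1 ∪ S2)
  have hv : v ∈ S1 ∧ v ∈ S2 := (hcap.symm ▸ rfl : v ∈ S1 ∩ S2)
  have hdisj : Disjoint (S1 \ {v}) (S2 \ {v}) :=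
    Set.disjoint_left.2 fun x h₁ h₂ => h₁.2 (hmem x h₁.1 h₂.1)
  have hsep : ∀ a ∈ S1 \ {v}, ∀ b ∈ S2 \ {v}, ¬ G.Adj a b := fun a ha b hb hab =>
    (hedges a b hab).elim (fun h => hb.2 (hmem b h.2 hb.1)) (fun h => ha.2 (hmem a ha.1 h.1))
  have glue₁ := minrk_le_minrk_induce_add_minrk_induce (F := F) (G := G) (s := S1) (t := S2 \ {v})
    (Set.eq_univ_of_forall fun x => by grind)
  have glue₂ := minrk_le_minrk_induce_add_minrk_induce (F := F) (G := G) (s := S1 \ {v}) (t := S2)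
    (Set.eq_univ_of_forall fun x => by grind)
  have split := minrk_induce_add_minrk_induce_le (F := F) hdisj hsep
  have mono₁ := minrk_induce_mono (F := F) (G := G) (Set.sdiff_subset (s := S1) (t := {v}))
  have mono₂ := minrk_induce_mono (F := F) (G := G) (Set.sdiff_subset (s := S2) (t := {v}))
  have step₁ := minrk_induce_le_minrk_induce_diff_add_one (F := F) (G := G) hv.1
  have step₂ := minrk_induce_le_minrk_induce_diff_add_one (F := F) (G := G) hv.2
  have crit := minrk_induce_diff_add_minrk_induce_diff_lt (F := F) hdisj hsep
  set a := minrk F (G.induce (S1 \ {v}))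
  set b := minrk F (G.induce (S2 \ {v}))
  set a' := minrk F (G.induce S1)
  set b' := minrk F (G.induce S2)
  rcases (by omega : a' - a = 0 ∨ a' - a = 1) with h₁ | h₁ <;>
    rcases (by omega : b' - b = 0 ∨ b' - b = 1) with h₂ | h₂ <;>
    rw [h₁, h₂] <;> omega

theorem minrk_union_one_common_vertex {V F : Type} [Fintype V] [Field F] [Fintype F]
    (G : SimpleGraph V) (S1 S2 : Set V) (v : V)
    (hcap : S1 ∩ S2 = {v}) (hcup : S1 ∪ S2 = Set.univ)
    (hedges : ∀ a b, G.Adj a b → (a ∈ S1 ∧ b ∈ S1) ∨ (a ∈ S2 ∧ b ∈ S2)) :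
    minrk F G =
      minrk F (G.induce (S1 \ {v})) + minrk F (G.induce (S2 \ {v})) +
        (minrk F (G.induce S1) - minrk F (G.induce (S1 \ {v}))) *
          (minrk F (G.induce S2) - minrk F (G.induce (S2 \ {v}))) :=
  minrk_union_one_common_vertex_general G S1 S2 v hcap hcup hedges
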